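/- Let G be a finite abstract simplicial complex with vertex set V(G), f : V(G) → ℤ locally injective, and v ∈ V(G). Then the Poincaré–Hopf index satisfies i_f(v) = 1 − χ(S^-_f(v)), where S^-_f(v) = {y ∈ S(v) : f(w) < f(v) for every vertex w ∈ y}. -/
import Mathlib


open Finset Polynomial

namespace SphereFormula

variable {V : Type} [DecidableEq V]

/-- A finite abstract simplicial complex: a finite collection of nonempty finite sets
that is closed under taking nonempty subsets. -/
def IsComplex (G : Finset (Finset V)) : Prop :=
  ∀ x ∈ G, x.Nonempty ∧ ∀ y, y ⊆ x → y.Nonempty → y ∈ G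

/-- `w x = (-1)^(dim x)` where `dim x = |x| - 1`. -/
def w (x : Finset V) : ℤ := (-1) ^ (x.card - 1)

/-- Euler characteristic of a finite set of simplices: `χ(A) = Σ_{x ∈ A} w x`. -/
def chi (A : Finset (Finset V)) : ℤ := ∑ x ∈ A, w x

/-- The star `U(x) = {y ∈ G : x ⊆ y}`. -/
def star (G : Finset (Finset V)) (x : Finset V) : Finset (Finset V) :=
  G.filter fun y => x ⊆ y

/-- The unit ball `B(x) = {z ∈ G : z ⊆ y for some y ∈ U(x)}` (closure of the star). -/
def ball (G : Finset (Finset V)) (x : Finset V) : Finset (Finset V) :=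
  G.filter fun z => ∃ y ∈ G, x ⊆ y ∧ z ⊆ y

/-- The unit sphere `S(x) = B(x) \ U(x)`. -/
def sphere (G : Finset (Finset V)) (x : Finset V) : Finset (Finset V) :=
  ball G x \ star G x

/-- The vertex set of `G`: those `v` with `{v} ∈ G`. -/
def verts (G : Finset (Finset V)) : Finset V :=
  (G.biUnion id).filter fun v => {v} ∈ G

/-- Contractibility, defined inductively: a single vertex complex is contractible, and `G`
is contractible if there is `x ∈ G` with both `S(x)` and `G \ U(x)` contractible. -/
inductive Contractible : Finset (Finset V) → Prop where
  | point (v : V) : Contractible ({({v} : Finset V)} : Finset (Finset V))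
  | step (G : Finset (Finset V)) (x : Finset V) (hx : x ∈ G)
      (hS : Contractible (sphere G x)) (hG : Contractible (G \ star G x)) :
      Contractible G

mutual
  /-- `G` is a `d`-manifold (`d ≥ 0`): every unit sphere `S(x)` is a `(d-1)`-sphere. -/
  inductive IsManifold : ℤ → Finset (Finset V) → Prop where
    | mk (d : ℤ) (G : Finset (Finset V)) (hd : 0 ≤ d)
        (h : ∀ x ∈ G, IsSphere (d - 1) (sphere G x)) : IsManifold d G

  /-- `d`-spheres: the empty complex is the `(-1)`-sphere, and a `d`-sphere is a
  `d`-manifold `G` such that `G \ U(x)` is contractible for some `x ∈ G`. -/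
  inductive IsSphere : ℤ → Finset (Finset V) → Prop where
    | empty : IsSphere (-1) (∅ : Finset (Finset V))
    | mk (d : ℤ) (G : Finset (Finset V)) (hm : IsManifold d G)
        (h : ∃ x ∈ G, Contractible (G \ star G x)) : IsSphere d G
end

/-- The f-function `f_G(t) = 1 + Σ_{k ≥ 0} f_k(G) t^(k+1) = 1 + Σ_{x ∈ G} t^|x|`. -/
noncomputable def fPoly (G : Finset (Finset V)) : Polynomial ℚ :=
  1 + ∑ x ∈ G, Polynomial.X ^ x.card

/-- `F_H(t) = ∫_0^t f_H(s) ds = t + Σ_{k ≥ 0} f_k(H) t^(k+2)/(k+2)`. -/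
noncomputable def FPoly (H : Finset (Finset V)) : Polynomial ℚ :=
  Polynomial.X +
    ∑ x ∈ H, Polynomial.C (((x.card : ℚ) + 1)⁻¹) * Polynomial.X ^ (x.card + 1)

/-- The join `G + H = G ∪ H ∪ {x ∪ y : x ∈ G, y ∈ H}`. -/
def joinC (G H : Finset (Finset V)) : Finset (Finset V) :=
  G ∪ H ∪ (G ×ˢ H).image fun p => p.1 ∪ p.2

/-- The barycentric refinement: simplices are the nonempty chains in `(G, ⊆)`. -/
def bary (G : Finset (Finset V)) : Finset (Finset (Finset V)) :=
  G.powerset.filter fun c => c.Nonempty ∧ ∀ x ∈ c, ∀ y ∈ c, x ⊆ y ∨ y ⊆ x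

/-- `f` is locally injective: distinct vertices of a common simplex have distinct values. -/
def LocallyInjective (G : Finset (Finset V)) (f : V → ℤ) : Prop :=
  ∀ x ∈ G, ∀ v ∈ x, ∀ u ∈ x, v ≠ u → f v ≠ f u

/-- the Poincaré–Hopf index satisfies `i_f(v) = 1 - χ(S⁻_f(v))`, where
`S⁻_f(v) = {y ∈ S(v) : f(u) < f(v) for every vertex u ∈ y}`. -/
theorem index_eq_one_sub_chi {V : Type} [DecidableEq V] (G : Finset (Finset V))
    (hG : IsComplex G) (f : V → ℤ) (hf : LocallyInjective G f)
    (v : V) (hv : v ∈ verts G) :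
    ∑ x ∈ G.filter (fun x => v ∈ x ∧ ∀ u ∈ x, f u ≤ f v), w x
      = 1 - chi ((sphere G {v}).filter fun y => ∀ u ∈ y, f u < f v) := by
  classical
  have hvG : ({v} : Finset V) ∈ G := (Finset.mem_filter.mp hv).2
  set A := G.filter (fun x => v ∈ x ∧ ∀ u ∈ x, f u ≤ f v) with hA
  set B := (sphere G {v}).filter (fun y => ∀ u ∈ y, f u < f v) with hB
  have hvA : ({v} : Finset V) ∈ A := by
    rw [hA, Finset.mem_filter]
    exact ⟨hvG, Finset.mem_singleton_self v, fun u hu => by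
      rw [Finset.mem_singleton] at hu; rw [hu]⟩
  have key : ∑ x ∈ A.erase {v}, w x = ∑ y ∈ B, (- w y) := by
    apply Finset.sum_nbij' (fun x => x.erase v) (fun y => insert v y)
    · intro x hx
      obtain ⟨hne, hxA⟩ := Finset.mem_erase.mp hx
      rw [hA, Finset.mem_filter] at hxA
      obtain ⟨hxG, hvx, hle⟩ := hxA
      have hcard : 1 < x.card := by
        rcases lt_or_ge 1 x.card with h | h
        · exact h
        · exfalso; apply hne
          have := Finset.card_le_one.mp h
          apply Finset.eq_singleton_iff_unique_mem.mpr
          exact ⟨hvx, fun u hu => this u hu v hvx⟩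
      have herG : x.erase v ∈ G := by
        refine (hG x hxG).2 _ (Finset.erase_subset _ _) ?_
        rcases Finset.exists_mem_ne hcard v with ⟨u, hu, hune⟩
        exact ⟨u, Finset.mem_erase.mpr ⟨hune, hu⟩⟩
      rw [hB, Finset.mem_filter]
      constructor
      · rw [sphere, Finset.mem_sdiff]
        constructor
        · rw [ball, Finset.mem_filter]
          exact ⟨herG, x, hxG, Finset.singleton_subset_iff.mpr hvx,
            Finset.erase_subset _ _⟩
        · rw [star, Finset.mem_filter]
          rintro ⟨-, hsub⟩
          exact (Finset.mem_erase.mp (hsub (Finset.mem_singleton_self v))).1 rfl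
      · intro u hu
        obtain ⟨hune, hux⟩ := Finset.mem_erase.mp hu
        exact lt_of_le_of_ne (hle u hux) (fun h => hf x hxG v hvx u hux
          (Ne.symm hune) (by omega))
    · intro y hy
      rw [hB, Finset.mem_filter] at hy
      obtain ⟨hys, hlt⟩ := hy
      rw [sphere, Finset.mem_sdiff] at hys
      obtain ⟨hyb, hyns⟩ := hys
      rw [ball, Finset.mem_filter] at hyb
      obtain ⟨hyG, z, hzG, hvz, hyz⟩ := hyb
      have hvny : v ∉ y := by
        intro hvy
        exact hyns (Finset.mem_filter.mpr ⟨hyG, Finset.singleton_subset_iff.mpr hvy⟩)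
      have hiG : insert v y ∈ G := by
        refine (hG z hzG).2 _ ?_ ⟨v, Finset.mem_insert_self v y⟩
        exact Finset.insert_subset (Finset.singleton_subset_iff.mp hvz) hyz
      rw [Finset.mem_erase]
      constructor
      · intro h
        obtain ⟨u, hu⟩ := (hG y hyG).1
        have : u ∈ ({v} : Finset V) := h ▸ Finset.mem_insert_of_mem hu
        rw [Finset.mem_singleton] at this
        exact hvny (this ▸ hu)
      · rw [hA, Finset.mem_filter]
        refine ⟨hiG, Finset.mem_insert_self v y, fun u hu => ?_⟩
        rcases Finset.mem_insert.mp hu with h | h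
        · rw [h]
        · exact le_of_lt (hlt u h)
    · intro x hx
      obtain ⟨-, hxA⟩ := Finset.mem_erase.mp hx
      rw [hA, Finset.mem_filter] at hxA
      exact Finset.insert_erase hxA.2.1
    · intro y hy
      rw [hB, Finset.mem_filter] at hy
      obtain ⟨hys, -⟩ := hy
      rw [sphere, Finset.mem_sdiff] at hys
      obtain ⟨hyb, hyns⟩ := hys
      rw [ball, Finset.mem_filter] at hyb
      apply Finset.erase_insert
      intro hvy
      exact hyns (Finset.mem_filter.mpr ⟨hyb.1, Finset.singleton_subset_iff.mpr hvy⟩)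
    · intro x hx
      obtain ⟨hne, hxA⟩ := Finset.mem_erase.mp hx
      rw [hA, Finset.mem_filter] at hxA
      obtain ⟨hxG, hvx, -⟩ := hxA
      have hc : x.card = (x.erase v).card + 1 := by
        rw [Finset.card_erase_of_mem hvx]
        have : 1 ≤ x.card := Finset.card_pos.mpr ⟨v, hvx⟩
        omega
      have hc2 : 1 ≤ (x.erase v).card := by
        by_contra h
        push_neg at h
        apply hne
        have : (x.erase v).card = 0 := by omega
        have he : x.erase v = ∅ := Finset.card_eq_zero.mp this
        apply Finset.eq_singleton_iff_unique_mem.mpr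
        refine ⟨hvx, fun u hu => ?_⟩
        by_contra hne2
        exact (Finset.notMem_empty u) (he ▸ Finset.mem_erase.mpr ⟨hne2, hu⟩)
      rw [w, w, hc]
      obtain ⟨c, hcc⟩ : ∃ c, (x.erase v).card = c + 1 := ⟨(x.erase v).card - 1, by omega⟩
      rw [hcc]
      simp [pow_succ]
  have hw : w ({v} : Finset V) = 1 := by simp [w]
  calc ∑ x ∈ A, w x = w ({v} : Finset V) + ∑ x ∈ A.erase {v}, w x :=
        (Finset.add_sum_erase A w hvA).symm
    _ = 1 + ∑ y ∈ B, (- w y) := by rw [hw, key]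
    _ = 1 - chi B := by rw [chi, Finset.sum_neg_distrib]; ring


end SphereFormula
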